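/- Let D = H ∪ H̃ be an n-run foldover OofA design on m components with n = 2h, h ≥ 2, and all n runs distinct, where H̃ consists of the reverses of the runs in H. Then the second moment of the pairwise Kendall tau distances satisfies k_{m2}(D) ≥ n m(m−1)(9m² − 5m + 10) / (144(n−1)). -/

import Mathlib

/-- A run (addition order) on `m` components: position `r` receives component `x r`.
The position map `π_x` is `x.symm`. -/
abbrev Run (m : ℕ) := Equiv.Perm (Fin m)

/-- Kendall tau distance between two runs. -/
def kendall {m : ℕ} (x y : Run m) : ℕ :=
  (Finset.univ.filter fun p : Fin m × Fin m =>
    p.1 < p.2 ∧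
      (((x.symm p.1 : ℕ) : ℤ) - ((x.symm p.2 : ℕ) : ℤ)) *
        (((y.symm p.1 : ℕ) : ℤ) - ((y.symm p.2 : ℕ) : ℤ)) < 0).card

/-- The foldover (reverse) of a run: `x̃ r = x (m+1-r)` (positions reversed). -/
def revRun {m : ℕ} (x : Run m) : Run m := Fin.revPerm.trans x

/-- The `2h`-run foldover design `D = H ∪ H̃` generated by a half-design
`H = (x_1, …, x_h)`: its first `h` rows are the `x_i` and its last `h` rows
are their reverses `x̃_i`. -/
def foldover {m h : ℕ} (H : Fin h → Run m) : Fin (h + h) → Run m :=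
  Fin.append H fun i => revRun (H i)

/-- Average pairwise Kendall tau distance of an `n`-run design. -/
noncomputable def kave {m n : ℕ} (D : Fin n → Run m) : ℝ :=
  (∑ p ∈ Finset.univ.filter (fun p : Fin n × Fin n => p.1 < p.2),
      (kendall (D p.1) (D p.2) : ℝ)) / (n.choose 2 : ℝ)

/-- Second moment of the pairwise Kendall tau distances of an `n`-run design. -/
noncomputable def km2 {m n : ℕ} (D : Fin n → Run m) : ℝ :=
  (∑ p ∈ Finset.univ.filter (fun p : Fin n × Fin n => p.1 < p.2),
      (kendall (D p.1) (D p.2) : ℝ) ^ 2) / (n.choose 2 : ℝ)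

/-- Minimum pairwise Kendall tau distance of a design. -/
noncomputable def kmin {m n : ℕ} (D : Fin n → Run m) : ℕ :=
  sInf {v : ℕ | ∃ i j : Fin n, i < j ∧ kendall (D i) (D j) = v}

open Finset

def sgn {m : ℕ} (x : Run m) (p : Fin m × Fin m) : ℤ :=
  if (x.symm p.1 : ℕ) < (x.symm p.2 : ℕ) then 1 else -1

lemma sgn_mul_self {m : ℕ} (x : Run m) (p : Fin m × Fin m) : sgn x p * sgn x p = 1 := by
  unfold sgn; split_ifs <;> norm_num

lemma symm_ne {m : ℕ} (x : Run m) {p : Fin m × Fin m} (hp : p.1 ≠ p.2) :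
    ((x.symm p.1 : ℕ)) ≠ ((x.symm p.2 : ℕ)) := by
  intro hc
  exact hp (x.symm.injective (Fin.ext hc))

lemma sgn_rev {m : ℕ} (x : Run m) {p : Fin m × Fin m} (hp : p.1 ≠ p.2) :
    sgn (revRun x) p = - sgn x p := by
  have hne := symm_ne x hp
  have h1 : ((revRun x).symm p.1 : ℕ) = m - 1 - (x.symm p.1 : ℕ) := by
    simp [revRun, Fin.rev, Fin.val_rev]; omega
  have h2 : ((revRun x).symm p.2 : ℕ) = m - 1 - (x.symm p.2 : ℕ) := by
    simp [revRun, Fin.rev, Fin.val_rev]; omega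
  have hb1 : (x.symm p.1 : ℕ) < m := (x.symm p.1).isLt
  have hb2 : (x.symm p.2 : ℕ) < m := (x.symm p.2).isLt
  unfold sgn
  rw [h1, h2]
  split_ifs <;> omega

lemma ite_sign (A B C D : ℤ) (hA : A ≠ B) (hC : C ≠ D) :
    (1 - (if A < B then (1:ℤ) else -1) * (if C < D then 1 else -1)) =
      if (A - B) * (C - D) < 0 then 2 else 0 := by
  rcases hA.lt_or_gt with h | h <;> rcases hC.lt_or_gt with g | g
  · rw [if_pos h, if_pos g, if_neg (by nlinarith : ¬ (A - B) * (C - D) < 0)]; ring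
  · rw [if_pos h, if_neg (not_lt.mpr g.le), if_pos (by nlinarith : (A - B) * (C - D) < 0)]; ring
  · rw [if_neg (not_lt.mpr h.le), if_pos g, if_pos (by nlinarith : (A - B) * (C - D) < 0)]; ring
  · rw [if_neg (not_lt.mpr h.le), if_neg (not_lt.mpr g.le),
      if_neg (by nlinarith : ¬ (A - B) * (C - D) < 0)]; ring

lemma kendall_eq {m : ℕ} (x y : Run m) :
    2 * (kendall x y : ℤ) =
      ∑ p ∈ univ.filter (fun p : Fin m × Fin m => p.1 < p.2), (1 - sgn x p * sgn y p) := by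
  have key : ∀ p ∈ univ.filter (fun p : Fin m × Fin m => p.1 < p.2),
      (1 - sgn x p * sgn y p) =
        if (((x.symm p.1 : ℕ) : ℤ) - ((x.symm p.2 : ℕ) : ℤ)) *
        (((y.symm p.1 : ℕ) : ℤ) - ((y.symm p.2 : ℕ) : ℤ)) < 0 then 2 else 0 := by
    intro p hp
    have hp' : p.1 < p.2 := (mem_filter.mp hp).2
    have hx : (((x.symm p.1 : ℕ) : ℤ)) ≠ ((x.symm p.2 : ℕ) : ℤ) := by
      exact_mod_cast symm_ne x hp'.ne
    have hy : (((y.symm p.1 : ℕ) : ℤ)) ≠ ((y.symm p.2 : ℕ) : ℤ) := by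
      exact_mod_cast symm_ne y hp'.ne
    have hsx : sgn x p = if (((x.symm p.1 : ℕ) : ℤ)) < ((x.symm p.2 : ℕ) : ℤ) then 1 else -1 := by
      simp [sgn, Nat.cast_lt]
    have hsy : sgn y p = if (((y.symm p.1 : ℕ) : ℤ)) < ((y.symm p.2 : ℕ) : ℤ) then 1 else -1 := by
      simp [sgn, Nat.cast_lt]
    rw [hsx, hsy, ite_sign _ _ _ _ hx hy]
  rw [Finset.sum_congr rfl key, ← Finset.sum_filter, Finset.filter_filter]
  rw [Finset.sum_const, kendall]
  push_cast
  ring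

lemma kendall_comm {m : ℕ} (x y : Run m) : kendall x y = kendall y x := by
  unfold kendall
  congr 1
  apply Finset.filter_congr
  intro p _
  constructor <;> rintro ⟨h1, h2⟩ <;> exact ⟨h1, by rw [mul_comm]; exact h2⟩

lemma kendall_self {m : ℕ} (x : Run m) : kendall x x = 0 := by
  unfold kendall
  rw [Finset.card_eq_zero, Finset.filter_eq_empty_iff]
  intro p _
  rintro ⟨h1, h2⟩
  nlinarith [sq_nonneg (((x.symm p.1 : ℕ) : ℤ) - ((x.symm p.2 : ℕ) : ℤ))]

lemma foldover_sgn_sum {m h : ℕ} (H : Fin h → Run m) {p : Fin m × Fin m} (hp : p.1 ≠ p.2) :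
    ∑ i : Fin (h + h), sgn (foldover H i) p = 0 := by
  rw [Fin.sum_univ_add]
  have h1 : ∀ i : Fin h, foldover H (Fin.castAdd h i) = H i := fun i => Fin.append_left _ _ i
  have h2 : ∀ i : Fin h, foldover H (Fin.natAdd h i) = revRun (H i) := fun i =>
    Fin.append_right _ _ i
  simp only [h1, h2]
  rw [← Finset.sum_add_distrib]
  apply Finset.sum_eq_zero
  intro i _
  rw [sgn_rev _ hp]
  ring

/-- expansion of the double sum -/
lemma expand_sum {n : ℕ} (a b : Fin n → ℤ) :
    ∑ i : Fin n, ∑ j : Fin n, (1 - a i * a j) * (1 - b i * b j) =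
      (n : ℤ)^2 - (∑ i, a i)^2 - (∑ i, b i)^2 + (∑ i, a i * b i)^2 := by
  have e : ∀ (u v : Fin n → ℤ), (∑ i, u i) * (∑ j, v j) = ∑ i, ∑ j, u i * v j := by
    intro u v; rw [Finset.sum_mul_sum]
  have e1 := e a a
  have e2 := e b b
  have e3 := e (fun i => a i * b i) (fun i => a i * b i)
  have e4 : ((n:ℤ))^2 = ∑ _i : Fin n, ∑ _j : Fin n, (1:ℤ) := by
    simp [Finset.sum_const]; ring
  rw [sq (∑ i, a i), sq (∑ i, b i), sq (∑ i, a i * b i), e1, e2, e3, e4,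
    ← Finset.sum_sub_distrib, ← Finset.sum_sub_distrib, ← Finset.sum_add_distrib]
  apply Finset.sum_congr rfl
  intro i _
  rw [← Finset.sum_sub_distrib, ← Finset.sum_sub_distrib, ← Finset.sum_add_distrib]
  apply Finset.sum_congr rfl
  intro j _
  ring

/-- the per-row triple identity -/
lemma triple_id {m : ℕ} (x : Run m) {a b c : Fin m} (hab : a < b) (hbc : b < c) :
    sgn x (a,b) * sgn x (a,c) - sgn x (a,b) * sgn x (b,c) + sgn x (a,c) * sgn x (b,c) = 1 := by
  have h1 : ((x.symm a : ℕ)) ≠ (x.symm b : ℕ) := symm_ne x (p := (a,b)) hab.ne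
  have h2 : ((x.symm a : ℕ)) ≠ (x.symm c : ℕ) := symm_ne x (p := (a,c)) (hab.trans hbc).ne
  have h3 : ((x.symm b : ℕ)) ≠ (x.symm c : ℕ) := symm_ne x (p := (b,c)) hbc.ne
  unfold sgn
  simp only
  split_ifs <;> norm_num <;> omega

lemma card_filter_lt (m : ℕ) (b : Fin m) :
    (univ.filter (fun a : Fin m => a < b)).card = (b : ℕ) := by
  have : (univ.filter (fun a : Fin m => a < b)) = Finset.Iio b := by
    ext a; simp
  rw [this, Fin.card_Iio]

lemma card_filter_gt (m : ℕ) (b : Fin m) :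
    (univ.filter (fun a : Fin m => b < a)).card = m - 1 - (b : ℕ) := by
  have : (univ.filter (fun a : Fin m => b < a)) = Finset.Ioi b := by
    ext a; simp
  rw [this, Fin.card_Ioi]

lemma sum_ite_lt (m : ℕ) (b : Fin m) : (∑ a : Fin m, if a < b then 1 else 0) = (b : ℕ) := by
  rw [← card_filter_lt m b, Finset.card_filter]

lemma sum_ite_gt (m : ℕ) (b : Fin m) :
    (∑ a : Fin m, if b < a then 1 else 0) = m - 1 - (b : ℕ) := by
  rw [← card_filter_gt m b, Finset.card_filter]

lemma card_P (m : ℕ) :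
    2 * (univ.filter (fun p : Fin m × Fin m => p.1 < p.2)).card = m * (m - 1) := by
  rw [Finset.card_filter, Fintype.sum_prod_type_right]
  simp only [sum_ite_lt]
  rw [Fin.sum_univ_eq_sum_range (fun i => i)]
  rw [mul_comm, Finset.sum_range_id_mul_two]

lemma gauss_cube (m : ℕ) : 6 * (∑ i ∈ Finset.range m, i * (m - 1 - i)) = m * (m-1) * (m-2) := by
  induction m with
  | zero => simp
  | succ m ih =>
    have step : ∀ i ∈ Finset.range m, i * (m + 1 - 1 - i) = i * (m - 1 - i) + i := by
      intro i hi
      have : i < m := Finset.mem_range.mp hi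
      have e : m + 1 - 1 - i = (m - 1 - i) + 1 := by omega
      rw [e, Nat.mul_add, Nat.mul_one]
    rw [Finset.sum_range_succ]
    have e2 : m + 1 - 1 - m = 0 := by omega
    rw [e2, Nat.mul_zero, Nat.add_zero, Finset.sum_congr rfl step, Finset.sum_add_distrib,
      Nat.mul_add, ih]
    have g : (∑ i ∈ Finset.range m, i) * 2 = m * (m - 1) := Finset.sum_range_id_mul_two m
    have : 6 * ∑ i ∈ Finset.range m, i = 3 * (m * (m-1)) := by omega
    rw [this]
    rcases Nat.lt_or_ge m 2 with h | h
    · interval_cases m <;> simp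
    · obtain ⟨k, rfl⟩ : ∃ k, m = k + 2 := ⟨m - 2, by omega⟩
      have e1 : k + 2 - 1 = k + 1 := rfl
      have e2 : k + 2 - 2 = k := rfl
      have e3 : k + 2 + 1 - 1 = k + 2 := rfl
      have e4 : k + 2 + 1 - 2 = k + 1 := rfl
      rw [e1, e2, e3, e4]
      ring

lemma card_Tri (m : ℕ) :
    6 * (univ.filter (fun t : Fin m × Fin m × Fin m => t.1 < t.2.1 ∧ t.2.1 < t.2.2)).card
      = m * (m - 1) * (m - 2) := by
  rw [Finset.card_filter, Fintype.sum_prod_type]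
  have inner : ∀ a : Fin m, (∑ bc : Fin m × Fin m, if a < bc.1 ∧ bc.1 < bc.2 then 1 else 0)
      = ∑ b : Fin m, (if a < b then (1:ℕ) else 0) * (m - 1 - (b:ℕ)) := by
    intro a
    rw [Fintype.sum_prod_type]
    apply Finset.sum_congr rfl
    intro b _
    rw [← sum_ite_gt m b, Finset.mul_sum]
    apply Finset.sum_congr rfl
    intro c _
    by_cases h1 : a < b <;> by_cases h2 : b < c <;> simp [h1, h2]
  simp only [inner]
  rw [Finset.sum_comm]
  have inner2 : ∀ b : Fin m, (∑ a : Fin m, (if a < b then (1:ℕ) else 0) * (m - 1 - (b:ℕ)))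
      = (b : ℕ) * (m - 1 - (b:ℕ)) := by
    intro b
    rw [← Finset.sum_mul, sum_ite_lt]
  simp only [inner2]
  rw [Fin.sum_univ_eq_sum_range (fun i => i * (m - 1 - i))]
  exact gauss_cube m

def gmap {m : ℕ} (t : Fin m × Fin m × Fin m) (k : ℕ) : (Fin m × Fin m) × (Fin m × Fin m) :=
  if k = 0 then ((t.1, t.2.1), (t.1, t.2.2))
  else if k = 1 then ((t.1, t.2.2), (t.1, t.2.1))
  else if k = 2 then ((t.1, t.2.1), (t.2.1, t.2.2))
  else if k = 3 then ((t.2.1, t.2.2), (t.1, t.2.1))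
  else if k = 4 then ((t.1, t.2.2), (t.2.1, t.2.2))
  else ((t.2.1, t.2.2), (t.1, t.2.2))

lemma gmap_injOn {m : ℕ} :
    Set.InjOn (fun tk : (Fin m × Fin m × Fin m) × ℕ => gmap tk.1 tk.2)
      ((univ.filter (fun t : Fin m × Fin m × Fin m => t.1 < t.2.1 ∧ t.2.1 < t.2.2)) ×ˢ
        (Finset.range 6) : Finset _) := by
  rintro ⟨⟨a, b, c⟩, k⟩ hx ⟨⟨a', b', c'⟩, k'⟩ hy hxy
  simp only [Finset.coe_product, Set.mem_prod, Finset.mem_coe, Finset.mem_filter,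
    Finset.mem_range, Finset.mem_univ, true_and] at hx hy
  obtain ⟨⟨hab, hbc⟩, hk⟩ := hx
  obtain ⟨⟨hab', hbc'⟩, hk'⟩ := hy
  simp only [Fin.lt_def] at hab hbc hab' hbc'
  interval_cases k <;> interval_cases k' <;>
    simp only [gmap, Prod.mk.injEq, Fin.ext_iff, if_true, if_false] at hxy ⊢ <;>
    norm_num at hxy ⊢ <;>
    omega

def TT {m n : ℕ} (D : Fin n → Run m) (pq : (Fin m × Fin m) × (Fin m × Fin m)) : ℤ :=
  ∑ i, sgn (D i) pq.1 * sgn (D i) pq.2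

lemma TT_diag {m n : ℕ} (D : Fin n → Run m) (p : Fin m × Fin m) : TT D (p, p) = n := by
  unfold TT
  rw [Finset.sum_congr rfl (fun i _ => sgn_mul_self (D i) p)]
  simp

lemma TT_comm {m n : ℕ} (D : Fin n → Run m) (p q : Fin m × Fin m) :
    TT D (p, q) = TT D (q, p) := by
  unfold TT
  exact Finset.sum_congr rfl (fun i _ => mul_comm _ _)

lemma TT_triple {m n : ℕ} (D : Fin n → Run m) {a b c : Fin m} (hab : a < b) (hbc : b < c) :
    TT D ((a,b),(a,c)) - TT D ((a,b),(b,c)) + TT D ((a,c),(b,c)) = n := by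
  unfold TT
  rw [← Finset.sum_sub_distrib, ← Finset.sum_add_distrib,
    Finset.sum_congr rfl (fun i _ => triple_id (D i) hab hbc)]
  simp

lemma TT_triple_sq {m n : ℕ} (D : Fin n → Run m) {a b c : Fin m} (hab : a < b) (hbc : b < c) :
    (n : ℤ)^2 ≤ 3 * (TT D ((a,b),(a,c))^2 + TT D ((a,b),(b,c))^2 + TT D ((a,c),(b,c))^2) := by
  have h := TT_triple D hab hbc
  nlinarith [sq_nonneg (TT D ((a,b),(a,c)) + TT D ((a,b),(b,c))),
    sq_nonneg (TT D ((a,b),(b,c)) + TT D ((a,c),(b,c))),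
    sq_nonneg (TT D ((a,b),(a,c)) - TT D ((a,c),(b,c)))]

lemma sum_TT_bound {m n : ℕ} (D : Fin n → Run m) :
    3 * ((n:ℤ)^2 * ((univ.filter (fun p : Fin m × Fin m => p.1 < p.2)).card : ℤ))
      + 2 * (n:ℤ)^2 *
        ((univ.filter (fun t : Fin m × Fin m × Fin m => t.1 < t.2.1 ∧ t.2.1 < t.2.2)).card : ℤ)
    ≤ 3 * ∑ pq ∈ (univ.filter (fun p : Fin m × Fin m => p.1 < p.2)) ×ˢ
        (univ.filter (fun p : Fin m × Fin m => p.1 < p.2)), TT D pq ^ 2 := by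
  classical
  set P := univ.filter (fun p : Fin m × Fin m => p.1 < p.2) with hP
  set Tri := univ.filter (fun t : Fin m × Fin m × Fin m => t.1 < t.2.1 ∧ t.2.1 < t.2.2) with hTri
  set A : Finset ((Fin m × Fin m) × (Fin m × Fin m)) := P.image (fun p => (p, p)) with hA
  set B : Finset ((Fin m × Fin m) × (Fin m × Fin m)) :=
    (Tri ×ˢ Finset.range 6).image (fun tk => gmap tk.1 tk.2) with hB
  have hsub : A ∪ B ⊆ P ×ˢ P := by
    intro pq hpq
    rw [Finset.mem_union] at hpq
    rcases hpq with hpq | hpq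
    · obtain ⟨p, hp, rfl⟩ := Finset.mem_image.mp hpq
      exact Finset.mem_product.mpr ⟨hp, hp⟩
    · obtain ⟨⟨⟨a, b, c⟩, k⟩, htk, rfl⟩ := Finset.mem_image.mp hpq
      rw [Finset.mem_product, hTri, Finset.mem_filter] at htk
      obtain ⟨⟨-, hab, hbc⟩, hk⟩ := htk
      rw [Finset.mem_range] at hk
      have hac : a < c := hab.trans hbc
      rw [Finset.mem_product, hP]
      unfold gmap
      interval_cases k <;> norm_num <;> simp [Finset.mem_filter, hab, hbc, hac]
  have hdisj : Disjoint A B := by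
    rw [Finset.disjoint_left]
    intro pq hpqA hpqB
    obtain ⟨p, hp, rfl⟩ := Finset.mem_image.mp hpqA
    obtain ⟨⟨⟨a, b, c⟩, k⟩, htk, heq⟩ := Finset.mem_image.mp hpqB
    rw [Finset.mem_product, hTri, Finset.mem_filter] at htk
    obtain ⟨⟨-, hab, hbc⟩, hk⟩ := htk
    rw [Finset.mem_range] at hk
    simp only [Fin.lt_def] at hab hbc
    interval_cases k <;>
      simp only [gmap, Prod.mk.injEq, Prod.ext_iff, Fin.ext_iff, if_true, if_false] at heq <;>
      norm_num at heq <;> omega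
  have hAsum : ∑ pq ∈ A, TT D pq ^ 2 = (P.card : ℤ) * (n:ℤ)^2 := by
    rw [hA, Finset.sum_image (by intro x _ y _ hxy; exact (Prod.mk.injEq _ _ _ _ ▸ hxy).1)]
    rw [Finset.sum_congr rfl (fun p _ => by rw [TT_diag D p])]
    simp [mul_comm, sq]
  have hBsum : 2 * (n:ℤ)^2 * (Tri.card : ℤ) ≤ 3 * ∑ pq ∈ B, TT D pq ^ 2 := by
    rw [hB, Finset.sum_image gmap_injOn, Finset.sum_product, Finset.mul_sum]
    have e0 : 2 * (n:ℤ)^2 * (Tri.card : ℤ) = ∑ _t ∈ Tri, 2 * (n:ℤ)^2 := by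
      rw [Finset.sum_const, nsmul_eq_mul]; ring
    rw [e0]
    apply Finset.sum_le_sum
    intro t ht
    rw [hTri, Finset.mem_filter] at ht
    obtain ⟨-, hab, hbc⟩ := ht
    obtain ⟨a, b, c⟩ := t
    simp only [Finset.sum_range_succ, Finset.sum_range_zero, gmap]
    norm_num
    have e1 : TT D ((a,c),(a,b)) = TT D ((a,b),(a,c)) := TT_comm D _ _
    have e2 : TT D ((b,c),(a,b)) = TT D ((a,b),(b,c)) := TT_comm D _ _
    have e3 : TT D ((b,c),(a,c)) = TT D ((a,c),(b,c)) := TT_comm D _ _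
    rw [e1, e2, e3]
    have := TT_triple_sq D hab hbc
    nlinarith
  calc 3 * ((n:ℤ)^2 * (P.card : ℤ)) + 2 * (n:ℤ)^2 * (Tri.card : ℤ)
      ≤ 3 * ((P.card : ℤ) * (n:ℤ)^2) + 3 * ∑ pq ∈ B, TT D pq ^ 2 := by
        rw [mul_comm ((n:ℤ)^2)]; linarith [hBsum]
    _ = 3 * (∑ pq ∈ A, TT D pq ^ 2 + ∑ pq ∈ B, TT D pq ^ 2) := by rw [hAsum]; ring
    _ = 3 * ∑ pq ∈ A ∪ B, TT D pq ^ 2 := by rw [Finset.sum_union hdisj]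
    _ ≤ 3 * ∑ pq ∈ P ×ˢ P, TT D pq ^ 2 := by
        have := Finset.sum_le_sum_of_subset_of_nonneg hsub
          (fun pq _ _ => sq_nonneg (TT D pq))
        linarith

lemma main_int {m h' : ℕ} (hm : 2 ≤ m) (H : Fin h' → Run m) :
    ((h' + h' : ℕ) : ℤ)^2 * (m:ℤ) * ((m:ℤ) - 1) * (9*(m:ℤ)^2 - 5*(m:ℤ) + 10)
      ≤ 144 * ∑ i : Fin (h' + h'), ∑ j : Fin (h' + h'),
          (kendall (foldover H i) (foldover H j) : ℤ)^2 := by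
  classical
  set n := h' + h' with hn
  set D := foldover H with hD
  set P := univ.filter (fun p : Fin m × Fin m => p.1 < p.2) with hP
  -- step A
  have key : ∀ i j : Fin n, (4:ℤ) * (kendall (D i) (D j) : ℤ)^2 =
      ∑ p ∈ P, ∑ q ∈ P, (1 - sgn (D i) p * sgn (D j) p) * (1 - sgn (D i) q * sgn (D j) q) := by
    intro i j
    have h2 := kendall_eq (D i) (D j)
    have : (4:ℤ) * (kendall (D i) (D j) : ℤ)^2 =
        (2 * (kendall (D i) (D j) : ℤ)) * (2 * (kendall (D i) (D j) : ℤ)) := by ring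
    rw [this, h2, Finset.sum_mul_sum]
  have inner : ∀ pq ∈ P ×ˢ P,
      ((n:ℤ)^2 + TT D pq ^ 2) =
        ∑ ij ∈ (univ ×ˢ univ : Finset (Fin n × Fin n)),
          (1 - sgn (D ij.1) pq.1 * sgn (D ij.2) pq.1) *
            (1 - sgn (D ij.1) pq.2 * sgn (D ij.2) pq.2) := by
    intro pq hpq
    rw [Finset.mem_product, hP, Finset.mem_filter, Finset.mem_filter] at hpq
    obtain ⟨⟨-, hp⟩, ⟨-, hq⟩⟩ := hpq
    rw [Finset.sum_product]
    rw [expand_sum (fun i => sgn (D i) pq.1) (fun i => sgn (D i) pq.2)]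
    rw [hD, foldover_sgn_sum H hp.ne, foldover_sgn_sum H hq.ne]
    unfold TT
    ring_nf
    simp only [hn]; push_cast; ring
  have stepA : ∑ pq ∈ P ×ˢ P, ((n:ℤ)^2 + TT D pq ^ 2) =
      4 * ∑ i : Fin n, ∑ j : Fin n, (kendall (D i) (D j) : ℤ)^2 := by
    rw [Finset.sum_congr rfl inner, Finset.sum_comm]
    rw [Finset.mul_sum]
    rw [Finset.sum_product]
    apply Finset.sum_congr rfl
    intro i _
    rw [Finset.mul_sum]
    apply Finset.sum_congr rfl
    intro j _
    rw [key i j, Finset.sum_product]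
  have hTTb := sum_TT_bound D
  set Tri := univ.filter (fun t : Fin m × Fin m × Fin m => t.1 < t.2.1 ∧ t.2.1 < t.2.2) with hTri
  have c1 : 2 * (P.card : ℤ) = (m:ℤ) * ((m:ℤ) - 1) := by
    have h0 : 2 * P.card = m * (m - 1) := card_P m
    have h1 : ((2 * P.card : ℕ) : ℤ) = ((m * (m - 1) : ℕ) : ℤ) := by exact_mod_cast h0
    push_cast [Nat.cast_sub (by omega : 1 ≤ m)] at h1
    linarith
  have c2 : 6 * (Tri.card : ℤ) = (m:ℤ) * ((m:ℤ) - 1) * ((m:ℤ) - 2) := by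
    have h0 : 6 * Tri.card = m * (m - 1) * (m - 2) := card_Tri m
    have h1 : ((6 * Tri.card : ℕ) : ℤ) = ((m * (m - 1) * (m - 2) : ℕ) : ℤ) := by exact_mod_cast h0
    push_cast [Nat.cast_sub (by omega : 1 ≤ m), Nat.cast_sub (by omega : 2 ≤ m)] at h1
    linarith
  have sumconst : ∑ pq ∈ P ×ˢ P, ((n:ℤ)^2 + TT D pq ^ 2) =
      (n:ℤ)^2 * (P.card : ℤ)^2 + ∑ pq ∈ P ×ˢ P, TT D pq ^ 2 := by
    rw [Finset.sum_add_distrib, Finset.sum_const, Finset.card_product, nsmul_eq_mul]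
    push_cast
    ring
  have final : ((n:ℕ):ℤ)^2 * (m:ℤ) * ((m:ℤ) - 1) * (9*(m:ℤ)^2 - 5*(m:ℤ) + 10)
      ≤ 144 * ∑ i : Fin n, ∑ j : Fin n, (kendall (D i) (D j) : ℤ)^2 := by
    have e144 : 144 * ∑ i : Fin n, ∑ j : Fin n, (kendall (D i) (D j) : ℤ)^2 =
        36 * ((n:ℤ)^2 * (P.card : ℤ)^2 + ∑ pq ∈ P ×ˢ P, TT D pq ^ 2) := by
      rw [← sumconst, stepA]; ring
    rw [e144]
    have hineq : 36 * ((n:ℤ)^2 * (P.card : ℤ)^2) + 12 * (3 * ((n:ℤ)^2 * (P.card : ℤ))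
        + 2 * (n:ℤ)^2 * (Tri.card : ℤ))
        ≤ 36 * ((n:ℤ)^2 * (P.card : ℤ)^2 + ∑ pq ∈ P ×ˢ P, TT D pq ^ 2) := by
      linarith [hTTb]
    refine le_trans (le_of_eq ?_) hineq
    linear_combination (-(9*(n:ℤ)^2*(2*(P.card:ℤ) + (m:ℤ)*((m:ℤ)-1)) + 18*(n:ℤ)^2)) * c1
      - 4*(n:ℤ)^2 * c2
  exact final

lemma double_sum_eq {m n : ℕ} (D : Fin n → Run m) :
    (∑ i : Fin n, ∑ j : Fin n, (kendall (D i) (D j))^2)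
      = 2 * ∑ p ∈ univ.filter (fun p : Fin n × Fin n => p.1 < p.2),
          (kendall (D p.1) (D p.2))^2 := by
  classical
  have e0 : (∑ i : Fin n, ∑ j : Fin n, (kendall (D i) (D j))^2)
      = ∑ p ∈ (univ : Finset (Fin n × Fin n)), (kendall (D p.1) (D p.2))^2 := by
    rw [Fintype.sum_prod_type]
  rw [e0, ← Finset.sum_filter_add_sum_filter_not univ (fun p : Fin n × Fin n => p.1 < p.2)]
  have e1 : ∑ p ∈ univ.filter (fun p : Fin n × Fin n => ¬ p.1 < p.2), (kendall (D p.1) (D p.2))^2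
      = ∑ p ∈ univ.filter (fun p : Fin n × Fin n => p.2 < p.1), (kendall (D p.1) (D p.2))^2 := by
    rw [← Finset.sum_filter_add_sum_filter_not
      (univ.filter (fun p : Fin n × Fin n => ¬ p.1 < p.2)) (fun p => p.2 < p.1),
      Finset.filter_filter, Finset.filter_filter]
    have z : ∑ p ∈ univ.filter (fun p : Fin n × Fin n => ¬ p.1 < p.2 ∧ ¬ p.2 < p.1),
        (kendall (D p.1) (D p.2))^2 = 0 := by
      apply Finset.sum_eq_zero
      intro p hp
      obtain ⟨-, h1, h2⟩ := Finset.mem_filter.mp hp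
      have : p.1 = p.2 := le_antisymm (not_lt.mp h2) (not_lt.mp h1)
      rw [this, kendall_self]
      simp
    rw [z, add_zero]
    apply Finset.sum_congr _ (fun _ _ => rfl)
    apply Finset.filter_congr
    intro p _
    simp only [and_iff_right_iff_imp]
    exact fun h => asymm h
  rw [e1]
  have e2 : ∑ p ∈ univ.filter (fun p : Fin n × Fin n => p.2 < p.1), (kendall (D p.1) (D p.2))^2
      = ∑ p ∈ univ.filter (fun p : Fin n × Fin n => p.1 < p.2), (kendall (D p.1) (D p.2))^2 := by
    apply Finset.sum_nbij' (fun p => Prod.swap p) (fun p => Prod.swap p)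
    · intro p hp; simp at hp ⊢; exact hp
    · intro p hp; simp at hp ⊢; exact hp
    · intro p _; simp
    · intro p _; simp
    · intro p _; simp [kendall_comm]
  rw [e2]
  ring


/-- Lower bound for the second Kendall tau distance moment of a nonreplicated
foldover design with `n = 2h` runs. -/
theorem stmt15 {m h : ℕ} (hm : 2 ≤ m) (hh : 2 ≤ h) (H : Fin h → Run m)
    (hdist : Function.Injective (foldover H)) :
    km2 (foldover H) ≥
      (2 * (h : ℝ)) * (m : ℝ) * ((m : ℝ) - 1) * (9 * (m : ℝ) ^ 2 - 5 * (m : ℝ) + 10) /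
        (144 * (2 * (h : ℝ) - 1)) := by
  classical
  have hb := main_int hm H
  set n := h + h with hn
  set SF : ℕ := ∑ p ∈ univ.filter (fun p : Fin n × Fin n => p.1 < p.2),
      (kendall (foldover H p.1) (foldover H p.2))^2 with hSF
  have hdouble : (∑ i : Fin n, ∑ j : Fin n, (kendall (foldover H i) (foldover H j))^2) = 2 * SF :=
    double_sum_eq _
  have hb2 : ((n : ℕ) : ℤ)^2 * (m:ℤ) * ((m:ℤ) - 1) * (9*(m:ℤ)^2 - 5*(m:ℤ) + 10)
      ≤ 144 * (2 * (SF : ℤ)) := by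
    calc ((n : ℕ) : ℤ)^2 * (m:ℤ) * ((m:ℤ) - 1) * (9*(m:ℤ)^2 - 5*(m:ℤ) + 10)
        ≤ 144 * ∑ i : Fin n, ∑ j : Fin n, (kendall (foldover H i) (foldover H j) : ℤ)^2 := hb
      _ = 144 * (2 * (SF : ℤ)) := by
          have e : ((∑ i : Fin n, ∑ j : Fin n,
              (kendall (foldover H i) (foldover H j))^2 : ℕ) : ℤ)
              = ∑ i : Fin n, ∑ j : Fin n, (kendall (foldover H i) (foldover H j) : ℤ)^2 := by
            push_cast; rfl
          rw [← e, hdouble]; push_cast; ring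
  have hbR : ((n : ℕ) : ℝ)^2 * (m:ℝ) * ((m:ℝ) - 1) * (9*(m:ℝ)^2 - 5*(m:ℝ) + 10)
      ≤ 288 * (SF : ℝ) := by
    have := hb2
    have : (((n : ℕ) : ℤ)^2 * (m:ℤ) * ((m:ℤ) - 1) * (9*(m:ℤ)^2 - 5*(m:ℤ) + 10) : ℝ)
        ≤ ((144 * (2 * (SF : ℤ)) : ℤ) : ℝ) := by exact_mod_cast hb2
    push_cast at this
    linarith
  -- now unfold km2
  have hch : (n.choose 2 : ℝ) = (h : ℝ) * (2 * (h:ℝ) - 1) := by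
    have : n.choose 2 = h * (h + h - 1) := by
      rw [Nat.choose_two_right, hn]
      have e : (h + h) * (h + h - 1) = 2 * (h * (h + h - 1)) := by
        rw [← two_mul, mul_assoc]
      rw [e, Nat.mul_div_cancel_left _ (by norm_num : 0 < 2)]
    rw [this]
    push_cast [Nat.cast_sub (by omega : 1 ≤ h + h)]
    ring
  have hsum : (∑ p ∈ univ.filter (fun p : Fin n × Fin n => p.1 < p.2),
      (kendall (foldover H p.1) (foldover H p.2) : ℝ) ^ 2) = (SF : ℝ) := by
    rw [hSF]
    push_cast
    rfl
  unfold km2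
  rw [ge_iff_le, hsum, hch]
  have hden1 : (0:ℝ) < (h:ℝ) * (2 * (h:ℝ) - 1) := by
    have : (2:ℝ) ≤ (h:ℝ) := by exact_mod_cast hh
    nlinarith
  have hden2 : (0:ℝ) < 144 * (2 * (h:ℝ) - 1) := by
    have : (2:ℝ) ≤ (h:ℝ) := by exact_mod_cast hh
    nlinarith
  rw [div_le_div_iff₀ hden2 hden1]
  have hnr : ((n:ℕ):ℝ) = 2 * (h:ℝ) := by
    rw [hn]; push_cast; ring
  rw [hnr] at hbR
  have h2 : (2:ℝ) ≤ (h:ℝ) := by exact_mod_cast hh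
  nlinarith [hbR]
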